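/- Let X be a countable topological space with a countable basis B : ℕ → Set X. Then overt choice for X is topologically Weihrauch reducible to Π⁰₂C_ℕ: there exist continuous functions K and H such that K maps every name p of a nonempty closed set A ⊆ X to a name of some Π⁰₂C_ℕ-instance S ⊆ ℕ with S nonempty, and H maps (p, n), for any n ∈ S, to a name of some point of A. -/

import Mathlib

/-- `p` enumerates `S` if `S = {n | ∃ k, p k = n + 1}`. -/
def Enumerates (p : ℕ → ℕ) (S : Set ℕ) : Prop := S = {n | ∃ k, p k = n + 1}

/-- `B : ℕ → Set X` is a countable basis: each `B n` is open and every open set is a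
union of sets `B n`. -/
def IsCountableBasis {X : Type*} [TopologicalSpace X] (B : ℕ → Set X) : Prop :=
  (∀ n, IsOpen (B n)) ∧ ∀ U : Set X, IsOpen U → ∃ S : Set ℕ, U = ⋃ n ∈ S, B n

/-- A name of a point `x` is an enumeration of `{n | x ∈ B n}`. -/
def PointName {X : Type*} (B : ℕ → Set X) (x : X) (p : ℕ → ℕ) : Prop :=
  Enumerates p {n | x ∈ B n}

/-- A name of a closed set `A` is an enumeration of `{n | B n ∩ A ≠ ∅}`. -/
def ClosedName {X : Type*} (B : ℕ → Set X) (A : Set X) (p : ℕ → ℕ) : Prop :=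
  Enumerates p {n | (B n ∩ A).Nonempty}

/-- A name of the `Π⁰₂C_ℕ`-instance `{n | ∀ i, n ∈ U i → n ∈ V i}` determined by `U, V`:
an enumeration of the coded sets, via an injective coding `c : ℕ × ℕ × ℕ → ℕ`. -/
def Pi02Name (c : ℕ × ℕ × ℕ → ℕ) (U V : ℕ → Set ℕ) (p : ℕ → ℕ) : Prop :=
  Enumerates p ({m | ∃ i n, n ∈ U i ∧ c (0, i, n) = m} ∪
    {m | ∃ i n, n ∈ V i ∧ c (1, i, n) = m})


/-! A countable space `X` is enumerated as `x : ℕ → X`. The instance read off a name `p` of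
a closed set `A` selects those `n` such that every basic neighbourhood `B i` of `x n` meets
`A`, i.e. the `n` with `x n ∈ closure A = A`; a name of a chosen point `x n` depends on `n`
alone. Both maps only copy, recode or ignore entries of `p`, hence are continuous. -/

open Classical in
noncomputable def indicatorEnum (S : Set ℕ) (n : ℕ) : ℕ := if n ∈ S then n + 1 else 0

def mapEnum (f : ℕ → ℕ) (p : ℕ → ℕ) (k : ℕ) : ℕ := Nat.casesOn (p k) 0 fun m => f m + 1

def iUnionEnum (q : ℕ → ℕ → ℕ) (t : ℕ) : ℕ := q t.unpair.1 t.unpair.2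

def unionEnum (p q : ℕ → ℕ) (t : ℕ) : ℕ := if t.unpair.1 = 0 then p t.unpair.2 else q t.unpair.2

section Enumerations

variable {p q : ℕ → ℕ} {S T : Set ℕ}

theorem Enumerates.mem_iff (h : Enumerates p S) {n : ℕ} :
    n ∈ S ↔ ∃ k, p k = n + 1 := by
  rw [h]; rfl

theorem enumerates_indicatorEnum (S : Set ℕ) : Enumerates (indicatorEnum S) S := by
  ext n
  refine ⟨fun hn => ⟨n, by simp [indicatorEnum, hn]⟩, fun ⟨k, hk⟩ => ?_⟩
  unfold indicatorEnum at hk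
  split_ifs at hk with hkS
  · exact Nat.succ_injective hk ▸ hkS

theorem Enumerates.map (h : Enumerates p S) (f : ℕ → ℕ) :
    Enumerates (mapEnum f p) (f '' S) := by
  ext n
  constructor
  · rintro ⟨m, hm, rfl⟩
    obtain ⟨k, hk⟩ := h.mem_iff.1 hm
    exact ⟨k, by simp [mapEnum, hk]⟩
  · rintro ⟨k, hk⟩
    rcases hpk : p k with _ | m
    · simp [mapEnum, hpk] at hk
    · simp only [mapEnum, hpk, Nat.add_right_cancel_iff] at hk
      exact ⟨m, h.mem_iff.2 ⟨k, hpk⟩, hk⟩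

theorem Enumerates.iUnion {e : ℕ → ℕ → ℕ} {s : ℕ → Set ℕ} (h : ∀ i, Enumerates (e i) (s i)) :
    Enumerates (iUnionEnum e) (⋃ i, s i) := by
  ext n
  simp only [Set.mem_iUnion, (h _).mem_iff, Set.mem_ofPred_eq, iUnionEnum]
  constructor
  · rintro ⟨i, k, hk⟩
    exact ⟨Nat.pair i k, by simpa using hk⟩
  · rintro ⟨t, ht⟩
    exact ⟨_, _, ht⟩

theorem Enumerates.union (hp : Enumerates p S) (hq : Enumerates q T) :
    Enumerates (unionEnum p q) (S ∪ T) := by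
  ext n
  simp only [Set.mem_union, hp.mem_iff, hq.mem_iff, Set.mem_ofPred_eq, unionEnum]
  constructor
  · rintro (⟨k, hk⟩ | ⟨k, hk⟩)
    · exact ⟨Nat.pair 0 k, by simpa using hk⟩
    · exact ⟨Nat.pair 1 k, by simpa using hk⟩
  · rintro ⟨t, ht⟩
    split_ifs at ht
    exacts [Or.inl ⟨_, ht⟩, Or.inr ⟨_, ht⟩]

theorem continuous_mapEnum (f : ℕ → ℕ) : Continuous (mapEnum f) :=
  continuous_pi fun k => (continuous_of_discreteTopology (f := fun v : ℕ =>
    (Nat.casesOn v 0 fun m => f m + 1 : ℕ))).comp (continuous_apply k)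

theorem Continuous.iUnionEnum {Q : (ℕ → ℕ) → ℕ → ℕ → ℕ} (hQ : Continuous Q) :
    Continuous fun p => iUnionEnum (Q p) :=
  continuous_pi fun _ => (continuous_apply _).comp ((continuous_apply _).comp hQ)

theorem Continuous.unionEnum {P Q : (ℕ → ℕ) → ℕ → ℕ} (hP : Continuous P) (hQ : Continuous Q) :
    Continuous fun p => unionEnum (P p) (Q p) :=
  continuous_pi fun t => by unfold _root_.unionEnum; split_ifs <;> fun_prop

end Enumerations

theorem IsCountableBasis.mem_iff_forall_inter_nonempty {X : Type*} [TopologicalSpace X]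
    {B : ℕ → Set X} (hB : IsCountableBasis B) {A : Set X} (hA : IsClosed A) {y : X} :
    y ∈ A ↔ ∀ i, y ∈ B i → (B i ∩ A).Nonempty := by
  refine ⟨fun hy i hi => ⟨y, hi, hy⟩, fun h => ?_⟩
  rw [← hA.closure_eq, mem_closure_iff]
  intro U hU hyU
  obtain ⟨S, rfl⟩ := hB.2 U hU
  obtain ⟨i, hiS, hyi⟩ := Set.mem_iUnion₂.1 hyU
  obtain ⟨a, hai, haA⟩ := h i hyi
  exact ⟨a, Set.mem_iUnion₂.2 ⟨i, hiS, hai⟩, haA⟩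

theorem ClosedName.mem_iff {X : Type*} [TopologicalSpace X] {B : ℕ → Set X}
    (hB : IsCountableBasis B) {A : Set X} (hA : IsClosed A) {p : ℕ → ℕ} (hp : ClosedName B A p)
    {y : X} : y ∈ A ↔ ∀ i, y ∈ B i → ∃ k, p k = i + 1 := by
  rw [hB.mem_iff_forall_inter_nonempty hA]
  exact forall_congr' fun i => imp_congr_right fun _ => Enumerates.mem_iff hp

section Pi02

variable (c : ℕ × ℕ × ℕ → ℕ) (U : ℕ → Set ℕ)

/-- Enumerates the code of the instance given by `U` and `V i = if i ∈ T then univ else ∅`,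
where `p` enumerates `T`. -/
noncomputable def pi02Enum (p : ℕ → ℕ) : ℕ → ℕ :=
  unionEnum (indicatorEnum {m | ∃ i n, n ∈ U i ∧ c (0, i, n) = m})
    (iUnionEnum fun n => mapEnum (fun i => c (1, i, n)) p)

theorem pi02Name_pi02Enum (p : ℕ → ℕ) :
    Pi02Name c U (fun i => {_n | ∃ k, p k = i + 1}) (pi02Enum c U p) := by
  have hp : Enumerates p {i | ∃ k, p k = i + 1} := rfl
  rw [Pi02Name, pi02Enum]
  convert (enumerates_indicatorEnum _).union
    (Enumerates.iUnion fun n => hp.map fun i => c (1, i, n)) using 2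
  ext m
  simp only [Set.mem_ofPred_eq, Set.mem_iUnion, Set.mem_image]
  exact ⟨fun ⟨i, n, hi, hm⟩ => ⟨n, i, hi, hm⟩, fun ⟨n, i, hi, hm⟩ => ⟨i, n, hi, hm⟩⟩

theorem continuous_pi02Enum : Continuous (pi02Enum c U) :=
  continuous_const.unionEnum
    (continuous_pi fun n => continuous_mapEnum fun i => c (1, i, n)).iUnionEnum

end Pi02

theorem overt_choice_countable_reducible_Pi02CNat_general
    {X : Type*} [TopologicalSpace X] [Countable X] (B : ℕ → Set X)
    (hB : IsCountableBasis B) (c : ℕ × ℕ × ℕ → ℕ) :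
    ∃ (K : (ℕ → ℕ) → (ℕ → ℕ)) (Uf Vf : (ℕ → ℕ) → ℕ → Set ℕ)
      (H : (ℕ → ℕ) × ℕ → (ℕ → ℕ)),
      ContinuousOn K {p | ∃ A : Set X, A.Nonempty ∧ IsClosed A ∧ ClosedName B A p} ∧
      (∀ (p : ℕ → ℕ) (A : Set X), A.Nonempty → IsClosed A → ClosedName B A p →
        {n : ℕ | ∀ i, n ∈ Uf p i → n ∈ Vf p i}.Nonempty ∧
        Pi02Name c (Uf p) (Vf p) (K p)) ∧
      ContinuousOn H {q : (ℕ → ℕ) × ℕ |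
        (∃ A : Set X, A.Nonempty ∧ IsClosed A ∧ ClosedName B A q.1) ∧
        ∀ i, q.2 ∈ Uf q.1 i → q.2 ∈ Vf q.1 i} ∧
      ∀ (p : ℕ → ℕ) (A : Set X), A.Nonempty → IsClosed A → ClosedName B A p →
        ∀ n : ℕ, (∀ i, n ∈ Uf p i → n ∈ Vf p i) →
          ∃ x ∈ A, PointName B x (H (p, n)) := by
  rcases isEmpty_or_nonempty X with hX | hX
  · refine ⟨fun _ => 0, fun _ _ => ∅, fun _ _ => ∅, fun _ => 0, continuousOn_const,
      fun _ _ hA => (IsEmpty.false hA.some).elim, continuousOn_const,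
      fun _ _ hA => (IsEmpty.false hA.some).elim⟩
  obtain ⟨x, hx⟩ := exists_surjective_nat X
  let U : ℕ → Set ℕ := fun i => {n | x n ∈ B i}
  refine ⟨pi02Enum c U, fun _ => U, fun p i => {_n | ∃ k, p k = i + 1},
    fun q => indicatorEnum {i | x q.2 ∈ B i}, (continuous_pi02Enum c U).continuousOn, ?_,
    (continuous_of_discreteTopology (f := fun n => indicatorEnum {i | x n ∈ B i})).comp
      continuous_snd |>.continuousOn, ?_⟩
  · rintro p A ⟨a, ha⟩ hA hp
    obtain ⟨n, rfl⟩ := hx a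
    exact ⟨⟨n, (hp.mem_iff hB hA).1 ha⟩, pi02Name_pi02Enum c U p⟩
  · intro p A _ hA hp n hn
    exact ⟨x n, (hp.mem_iff hB hA).2 hn, enumerates_indicatorEnum _⟩

/-- For a countable countably-based space `X`, overt choice for `X` is topologically
Weihrauch reducible to `Π⁰₂C_ℕ`. -/
theorem overt_choice_countable_reducible_Pi02CNat
    {X : Type*} [TopologicalSpace X] [Countable X] (B : ℕ → Set X)
    (hB : IsCountableBasis B) (c : ℕ × ℕ × ℕ → ℕ) (hc : Function.Injective c) :
    ∃ (K : (ℕ → ℕ) → (ℕ → ℕ)) (Uf Vf : (ℕ → ℕ) → ℕ → Set ℕ)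
      (H : (ℕ → ℕ) × ℕ → (ℕ → ℕ)),
      ContinuousOn K {p | ∃ A : Set X, A.Nonempty ∧ IsClosed A ∧ ClosedName B A p} ∧
      (∀ (p : ℕ → ℕ) (A : Set X), A.Nonempty → IsClosed A → ClosedName B A p →
        {n : ℕ | ∀ i, n ∈ Uf p i → n ∈ Vf p i}.Nonempty ∧
        Pi02Name c (Uf p) (Vf p) (K p)) ∧
      ContinuousOn H {q : (ℕ → ℕ) × ℕ |
        (∃ A : Set X, A.Nonempty ∧ IsClosed A ∧ ClosedName B A q.1) ∧
        ∀ i, q.2 ∈ Uf q.1 i → q.2 ∈ Vf q.1 i} ∧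
      ∀ (p : ℕ → ℕ) (A : Set X), A.Nonempty → IsClosed A → ClosedName B A p →
        ∀ n : ℕ, (∀ i, n ∈ Uf p i → n ∈ Vf p i) →
          ∃ x ∈ A, PointName B x (H (p, n)) :=
  overt_choice_countable_reducible_Pi02CNat_general B hB c
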